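/- For λ, λ', α, α' ∈ ℂ \ {0} and β, β', γ, γ' ∈ ℂ, the 𝔏-modules Θ(λ, α, β, γ) and Θ(λ', α', β', γ') are isomorphic if and only if (λ, α, β, γ) = (λ', α', β', γ'). -/

import Mathlib

/-! An isomorphism commutes with `h_0` and `d_0`, i.e. with multiplication by `t` and `s`, so it
is multiplication by a unit of `ℂ[s,t]`, a nonzero constant. A scalar intertwines the two actions
only if they coincide, and `e_0 · 1 = α(t/2 + β)`, `d_1 · 1 = λ(s + γ)` then recover the
parameters. -/

open MvPolynomial

abbrev R2 : Type := MvPolynomial (Fin 2) ℂ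

/-- Substitution `g(s,t) ↦ g(s - u, t + v)`. -/
noncomputable def sh (u v : ℂ) : R2 →ₐ[ℂ] R2 := aeval ![X 0 - C u, X 1 + C v]

/-- Action of `e_i` in `Θ(λ,α,β,γ)`. -/
noncomputable def thE (lam a b : ℂ) (i : ℤ) (g : R2) : R2 :=
  C (lam ^ i * a) * (C 2⁻¹ * X 1 + C b) * sh (i : ℂ) (-2) g

/-- Action of `f_i` in `Θ(λ,α,β,γ)`. -/
noncomputable def thF (lam a b : ℂ) (i : ℤ) (g : R2) : R2 :=
  C (-(lam ^ i / a)) * (C 2⁻¹ * X 1 - C b) * sh (i : ℂ) 2 g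

/-- Action of `h_i`. -/
noncomputable def opH (lam : ℂ) (i : ℤ) (g : R2) : R2 :=
  C (lam ^ i) * X 1 * sh (i : ℂ) 0 g

/-- Action of `d_i`. -/
noncomputable def opD (lam c : ℂ) (i : ℤ) (g : R2) : R2 :=
  C (lam ^ i) * (X 0 + C ((i : ℂ) * c)) * sh (i : ℂ) 0 g
namespace MvPolynomial

variable {σ R : Type*}

theorem map_mul_eq_mul_map_of_map_X_mul [CommSemiring R]
    (φ : MvPolynomial σ R →ₗ[R] MvPolynomial σ R) (hX : ∀ i g, φ (X i * g) = X i * φ g)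
    (p g : MvPolynomial σ R) : φ (p * g) = p * φ g := by
  induction p using MvPolynomial.induction_on generalizing g with
  | C r => rw [← smul_eq_C_mul, ← smul_eq_C_mul, map_smul]
  | add p q hp hq => rw [add_mul, map_add, hp, hq, add_mul]
  | mul_X p i hp => rw [mul_assoc, hp, hX, ← mul_assoc]

theorem exists_isUnit_eq_C_mul_of_map_X_mul [CommRing R] [IsReduced R]
    (φ : MvPolynomial σ R ≃ₗ[R] MvPolynomial σ R) (hX : ∀ i g, φ (X i * g) = X i * φ g) :
    ∃ r, IsUnit r ∧ ∀ g, φ g = C r * g := by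
  have hmul (g : MvPolynomial σ R) : φ g = g * φ 1 := by
    simpa using map_mul_eq_mul_map_of_map_X_mul φ.toLinearMap hX g 1
  obtain ⟨q, hq⟩ := φ.surjective 1
  have hunit : IsUnit (φ 1) := .of_mul_eq_one q (by rw [mul_comm, ← hmul, hq])
  obtain ⟨r, hr, hr1⟩ := isUnit_iff_eq_C_of_isReduced.mp hunit
  exact ⟨r, hr, fun g => by rw [hmul, hr1, mul_comm]⟩

end MvPolynomial

theorem eq_and_eq_of_forall_mul_add_eq {K : Type*} [CommRing K] [IsDomain K] {p q p' q' : K}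
    (hp : p ≠ 0)
    (h : ∀ t, p * (t + q) = p' * (t + q')) : p = p' ∧ q = q' := by
  have h0 := h 0
  have h1 := h 1
  have hpp : p = p' := by linear_combination h1 - h0
  subst hpp
  exact ⟨rfl, mul_left_cancel₀ hp (by simpa using h0)⟩

theorem sh_zero_zero_apply (g : R2) : sh 0 0 g = g := by
  have hX : (![X 0 - C 0, X 1 + C 0] : Fin 2 → R2) = X := by
    funext i; fin_cases i <;> simp
  rw [sh, hX, aeval_X_left_apply]

theorem sh_C (u v w : ℂ) : sh u v (C w) = C w :=
  (sh u v).commutes w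

theorem opH_zero (lam : ℂ) (g : R2) : opH lam 0 g = X 1 * g := by
  simp [opH, sh_zero_zero_apply]

theorem opD_zero (lam c : ℂ) (g : R2) : opD lam c 0 g = X 0 * g := by
  simp [opD, sh_zero_zero_apply]

theorem thE_C_mul (lam a b w : ℂ) (i : ℤ) (g : R2) :
    thE lam a b i (C w * g) = C w * thE lam a b i g := by
  simp only [thE, map_mul, sh_C]; ring

theorem opD_C_mul (lam c w : ℂ) (i : ℤ) (g : R2) :
    opD lam c i (C w * g) = C w * opD lam c i g := by
  simp only [opD, map_mul, sh_C]; ring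

theorem eval_thE_zero_one (lam a b t : ℂ) :
    eval ![0, 2 * t] (thE lam a b 0 1) = a * (t + b) := by
  simp [thE]

theorem eval_opD_one_one (lam c s : ℂ) :
    eval ![s, 0] (opD lam c 1 1) = lam * (s + c) := by
  simp [opD]

theorem stmt11_general (lam lam' a a' : ℂ) (hlam : lam ≠ 0)
    (ha : a ≠ 0) (b b' c c' : ℂ) :
    (∃ φ : R2 ≃ₗ[ℂ] R2,
      (∀ (i : ℤ) (g : R2), φ (thE lam a b i g) = thE lam' a' b' i (φ g)) ∧
      (∀ (i : ℤ) (g : R2), φ (thF lam a b i g) = thF lam' a' b' i (φ g)) ∧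
      (∀ (i : ℤ) (g : R2), φ (opH lam i g) = opH lam' i (φ g)) ∧
      (∀ (i : ℤ) (g : R2), φ (opD lam c i g) = opD lam' c' i (φ g)))
    ↔ (lam = lam' ∧ a = a' ∧ b = b' ∧ c = c') := by
  constructor
  · rintro ⟨φ, hE, -, hH, hD⟩
    obtain ⟨u, hu, hφ⟩ := exists_isUnit_eq_C_mul_of_map_X_mul φ fun i g => by
      fin_cases i
      · simpa [opD_zero] using hD 0 g
      · simpa [opH_zero] using hH 0 g
    have hCu : IsUnit (C u : R2) := hu.map C
    have hE' : thE lam a b 0 1 = thE lam' a' b' 0 1 :=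
      hCu.mul_left_cancel (by rw [← hφ, hE, hφ, thE_C_mul])
    have hD' : opD lam c 1 1 = opD lam' c' 1 1 :=
      hCu.mul_left_cancel (by rw [← hφ, hD, hφ, opD_C_mul])
    obtain ⟨rfl, rfl⟩ := eq_and_eq_of_forall_mul_add_eq (p' := lam') (q' := c') hlam fun s => by
      rw [← eval_opD_one_one, hD', eval_opD_one_one]
    obtain ⟨rfl, rfl⟩ := eq_and_eq_of_forall_mul_add_eq (p' := a') (q' := b') ha fun t => by
      rw [← eval_thE_zero_one lam, hE', eval_thE_zero_one]
    exact ⟨rfl, rfl, rfl, rfl⟩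
  · rintro ⟨rfl, rfl, rfl, rfl⟩
    exact ⟨LinearEquiv.refl ℂ R2, fun _ _ => rfl, fun _ _ => rfl, fun _ _ => rfl, fun _ _ => rfl⟩

/-- Θ(λ,α,β,γ) ≅ Θ(λ',α',β',γ') iff the parameters coincide; an isomorphism is a
ℂ-linear equivalence intertwining the actions of all e_i, f_i, h_i, d_i. -/
theorem stmt11 (lam lam' a a' : ℂ) (hlam : lam ≠ 0) (hlam' : lam' ≠ 0)
    (ha : a ≠ 0) (ha' : a' ≠ 0) (b b' c c' : ℂ) :
    (∃ φ : R2 ≃ₗ[ℂ] R2,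
      (∀ (i : ℤ) (g : R2), φ (thE lam a b i g) = thE lam' a' b' i (φ g)) ∧
      (∀ (i : ℤ) (g : R2), φ (thF lam a b i g) = thF lam' a' b' i (φ g)) ∧
      (∀ (i : ℤ) (g : R2), φ (opH lam i g) = opH lam' i (φ g)) ∧
      (∀ (i : ℤ) (g : R2), φ (opD lam c i g) = opD lam' c' i (φ g)))
    ↔ (lam = lam' ∧ a = a' ∧ b = b' ∧ c = c') :=
  stmt11_general lam lam' a a' hlam ha b b' c c'
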